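/- arXiv:2312.01400 — 4 statements merged into one kernel-verified Lean document; each statement's English description precedes it below -/
import Mathlib

section
/- Let A and B be real tensors of order m and dimension n. Then {A,B} is an R0 tensor pair if and only if SOL(A,B,q) is a compact subset of ℝ^n × ℝ^n for every q ∈ ℝ^n. -/
open Finset

/-- A real tensor of order `m` and dimension `n`, indexed by a first index in `Fin n`
and `m - 1` further indices in `Fin n`. -/
abbrev Tensor (m n : ℕ) : Type := Fin n → (Fin (m - 1) → Fin n) → ℝ

/-- `tApp A x` is the vector `A x^{m-1}` with `i`-th component
`∑_{i₂,…,i_m} a_{i i₂ … i_m} x_{i₂} ⋯ x_{i_m}`. -/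
noncomputable def tApp {m n : ℕ} (A : Tensor m n) (x : Fin n → ℝ) : Fin n → ℝ :=
  fun i => ∑ j : Fin (m - 1) → Fin n, A i j * ∏ k, x (j k)

/-- The identity tensor: entries `1` when all indices coincide, `0` otherwise,
so that `tApp (idT m n) x = x^{[m-1]}`. -/
def idT (m n : ℕ) : Tensor m n :=
  fun i j => if (∀ k, j k = i) then 1 else 0

/-- The solution set of the horizontal tensor complementarity problem HTCP(A,B,q). -/
def SOL {m n : ℕ} (A B : Tensor m n) (q : Fin n → ℝ) :
    Set ((Fin n → ℝ) × (Fin n → ℝ)) :=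
  {p | p.1 ⊓ p.2 = 0 ∧ tApp A p.1 - tApp B p.2 = q}

/-- `{A,B}` is an R0 tensor pair. -/
def R0Pair {m n : ℕ} (A B : Tensor m n) : Prop :=
  ∀ x y : Fin n → ℝ, x ⊓ y = 0 → tApp A x - tApp B y = 0 → x = 0 ∧ y = 0

/-- `{A,B}` is a P tensor pair. -/
def PPair {m n : ℕ} (A B : Tensor m n) : Prop :=
  ∀ x y : Fin n → ℝ, x * y ≤ 0 → tApp A x - tApp B y = 0 → x = 0 ∧ y = 0

/-!
`SOL A B 0` is a cone, because `tApp A (t • x) = t ^ (m - 1) • tApp A x`, and R0 says exactly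
that this cone is `{0}`. A bounded cone is `{0}`, whence compactness ⇒ R0. Conversely, under R0
the residual `‖tApp A v.1 - tApp B v.2‖` has a positive minimum `c` on the compact set of unit
vectors with `v.1 ⊓ v.2 = 0`; rescaling a solution `p` of `HTCP(A,B,q)` to the unit sphere gives
the a priori bound `c * ‖p‖ ^ (m - 1) ≤ ‖q‖`, so `SOL A B q` is bounded; it is closed by
continuity.
-/

open Bornology Metric

lemma smul_inf_of_nonneg {ι : Type*} {t : ℝ} (ht : 0 ≤ t) (x y : ι → ℝ) :
    t • (x ⊓ y) = t • x ⊓ t • y :=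
  funext fun i => smul_min_of_nonneg ht (x i) (y i)

lemma isClosed_setOf_fst_inf_snd_eq_zero (ι : Type*) :
    IsClosed {p : (ι → ℝ) × (ι → ℝ) | p.1 ⊓ p.2 = 0} :=
  isClosed_eq (continuous_pi fun i =>
    ((continuous_apply i).comp continuous_fst).min ((continuous_apply i).comp continuous_snd))
    continuous_const

lemma Bornology.IsBounded.subset_zero_of_smul_mem {E : Type*} [NormedAddCommGroup E]
    [NormedSpace ℝ E] {S : Set E} (hS : IsBounded S)
    (hcone : ∀ p ∈ S, ∀ t : ℝ, 0 < t → t • p ∈ S) :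
    S ⊆ {0} := by
  intro p hp
  rw [Set.mem_singleton_iff]
  by_contra hp0
  have hr : 0 < ‖p‖ := norm_pos_iff.2 hp0
  obtain ⟨C, hC⟩ := hS.exists_norm_le
  have hC0 : 0 ≤ C := (norm_nonneg p).trans (hC p hp)
  have hscaled := hC _ (hcone p hp ((C + 1) / ‖p‖) (by positivity))
  rw [norm_smul, Real.norm_of_nonneg (by positivity), div_mul_cancel₀ _ hr.ne'] at hscaled
  linarith

section Tensor

variable {m n : ℕ} (A B : Tensor m n)

lemma tApp_smul (t : ℝ) (x : Fin n → ℝ) : tApp A (t • x) = t ^ (m - 1) • tApp A x := by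
  funext i
  simp only [tApp, Pi.smul_apply, smul_eq_mul, Finset.mul_sum]
  refine Finset.sum_congr rfl fun j _ => ?_
  rw [Finset.prod_mul_distrib, Finset.prod_const, Finset.card_univ, Fintype.card_fin]
  ring

lemma continuous_tApp : Continuous (tApp A) :=
  continuous_pi fun _ => continuous_finsetSum _ fun _ _ =>
    continuous_const.mul (continuous_finsetProd _ fun _ _ => continuous_apply _)

lemma smul_mem_SOL {q : Fin n → ℝ} {p : (Fin n → ℝ) × (Fin n → ℝ)} (hp : p ∈ SOL A B q)
    {t : ℝ} (ht : 0 ≤ t) : t • p ∈ SOL A B (t ^ (m - 1) • q) := by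
  refine ⟨?_, ?_⟩
  · simp only [Prod.smul_fst, Prod.smul_snd, ← smul_inf_of_nonneg ht, hp.1, smul_zero]
  · simp only [Prod.smul_fst, Prod.smul_snd, tApp_smul, ← smul_sub, hp.2]

lemma continuous_tApp_fst_sub_tApp_snd :
    Continuous fun p : (Fin n → ℝ) × (Fin n → ℝ) => tApp A p.1 - tApp B p.2 :=
  ((continuous_tApp A).comp continuous_fst).sub ((continuous_tApp B).comp continuous_snd)

lemma isClosed_SOL (q : Fin n → ℝ) : IsClosed (SOL A B q) :=
  (isClosed_setOf_fst_inf_snd_eq_zero _).inter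
    (isClosed_eq (continuous_tApp_fst_sub_tApp_snd A B) continuous_const)

lemma r0Pair_iff_SOL_zero_subset : R0Pair A B ↔ SOL A B 0 ⊆ {0} := by
  simp only [R0Pair, Set.subset_def, SOL, Set.mem_ofPred_eq, Set.mem_singleton_iff,
    Prod.forall, Prod.mk_eq_zero, and_imp]

namespace R0Pair

variable {A B}

lemma exists_pos_le_norm (h : R0Pair A B) :
    ∃ c > 0, ∀ v : (Fin n → ℝ) × (Fin n → ℝ), ‖v‖ = 1 → v.1 ⊓ v.2 = 0 →
      c ≤ ‖tApp A v.1 - tApp B v.2‖ := by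
  set K := sphere (0 : (Fin n → ℝ) × (Fin n → ℝ)) 1 ∩ {v | v.1 ⊓ v.2 = 0}
  have hK : IsCompact K :=
    (isCompact_sphere 0 1).inter_right (isClosed_setOf_fst_inf_snd_eq_zero _)
  have hvK {v : (Fin n → ℝ) × (Fin n → ℝ)} (hv : ‖v‖ = 1) (hinf : v.1 ⊓ v.2 = 0) : v ∈ K :=
    ⟨mem_sphere_zero_iff_norm.2 hv, hinf⟩
  rcases K.eq_empty_or_nonempty with hempty | hne
  · exact ⟨1, one_pos, fun v hv hinf => absurd (hvK hv hinf) (hempty.symm ▸ Set.notMem_empty v)⟩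
  obtain ⟨v₀, ⟨hv₀, hinf₀⟩, hmin⟩ :=
    hK.exists_isMinOn hne (continuous_tApp_fst_sub_tApp_snd A B).norm.continuousOn
  refine ⟨_, norm_pos_iff.2 fun hres => ?_, fun v hv hinf => hmin (hvK hv hinf)⟩
  obtain ⟨h₁, h₂⟩ := h _ _ hinf₀ hres
  rw [show v₀ = 0 from Prod.ext h₁ h₂] at hv₀
  simp at hv₀

lemma exists_pos_mul_norm_pow_le (hm : 2 ≤ m) (h : R0Pair A B) :
    ∃ c > 0, ∀ q, ∀ p ∈ SOL A B q, c * ‖p‖ ^ (m - 1) ≤ ‖q‖ := by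
  obtain ⟨c, hc, hcv⟩ := h.exists_pos_le_norm
  refine ⟨c, hc, fun q p hp => ?_⟩
  rcases eq_or_ne p 0 with rfl | hp0
  · simp [zero_pow (by omega : m - 1 ≠ 0)]
  have hr : 0 < ‖p‖ := norm_pos_iff.2 hp0
  have hv := smul_mem_SOL A B hp (inv_nonneg.2 hr.le)
  have hcle := hcv _ (by rw [norm_smul, norm_inv, norm_norm, inv_mul_cancel₀ hr.ne']) hv.1
  rw [hv.2, norm_smul, norm_pow, norm_inv, norm_norm, inv_pow] at hcle
  rw [mul_comm]
  exact (le_inv_mul_iff₀ (pow_pos hr _)).1 hcle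

lemma isBounded_SOL (hm : 2 ≤ m) (h : R0Pair A B) (q : Fin n → ℝ) :
    IsBounded (SOL A B q) := by
  obtain ⟨c, hc, hbound⟩ := h.exists_pos_mul_norm_pow_le hm
  refine isBounded_iff_forall_norm_le.2 ⟨max 1 (‖q‖ / c), fun p hp => ?_⟩
  rcases le_or_gt ‖p‖ 1 with hle | hgt
  · exact le_max_of_le_left hle
  · refine le_max_of_le_right ?_
    calc ‖p‖ ≤ ‖p‖ ^ (m - 1) := le_self_pow₀ hgt.le (by omega)
      _ ≤ ‖q‖ / c := (le_div_iff₀' hc).2 (hbound q p hp)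

end R0Pair

end Tensor

theorem r0Pair_iff_sol_compact_general (m n : ℕ) (hm : 2 ≤ m) (A B : Tensor m n) :
    R0Pair A B ↔ ∀ q : Fin n → ℝ, IsCompact (SOL A B q) := by
  refine ⟨fun h q => isCompact_iff_isClosed_bounded.2 ⟨isClosed_SOL A B q, h.isBounded_SOL hm q⟩,
    fun h => ?_⟩
  rw [r0Pair_iff_SOL_zero_subset]
  refine (h 0).isBounded.subset_zero_of_smul_mem fun p hp t ht => ?_
  simpa using smul_mem_SOL A B hp ht.le

/-- `{A,B}` is an R0 tensor pair iff `SOL(A,B,q)` is compact for every `q`. -/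
theorem r0Pair_iff_sol_compact (m n : ℕ) (hm : 2 ≤ m) (hn : 1 ≤ n) (A B : Tensor m n) :
    R0Pair A B ↔ ∀ q : Fin n → ℝ, IsCompact (SOL A B q) :=
  r0Pair_iff_sol_compact_general m n hm A B
end

section
/- Let B be a real tensor of order m and dimension n. If B is an R0 tensor, then {𝓘, B} is an R0 tensor pair, where 𝓘 is the identity tensor of order m and dimension n. -/
open Finset

/-- `B` is an R0 tensor. -/
def R0Tensor {m n : ℕ} (B : Tensor m n) : Prop :=
  ∀ x : Fin n → ℝ, x ⊓ tApp B x = 0 → x = 0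

/-! If `x ⊓ y = 0` and `x^[m-1] = B y`, then wherever `x` vanishes so does `B y`, and wherever
`y` vanishes `B y = x^[m-1] ≥ 0`; hence `y ⊓ B y = 0`, so `y = 0` because `B` is R0, and then
`x^[m-1] = B 0 = 0`. -/

section OrderedSemiring

variable {R : Type*} [Semiring R] [LinearOrder R] [IsOrderedRing R]

lemma min_pow_eq_zero_of_min_eq_zero {a b : R} {k : ℕ} (hk : k ≠ 0) (h : min a b = 0) :
    min b (a ^ k) = 0 := by
  rcases min_eq_iff.mp h with ⟨rfl, hb⟩ | ⟨rfl, ha⟩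
  · rw [zero_pow hk]
    exact min_eq_right hb
  · exact min_eq_left (pow_nonneg ha k)

lemma Pi.inf_pow_eq_zero_of_inf_eq_zero {ι : Type*} {x y : ι → R} {k : ℕ} (hk : k ≠ 0)
    (h : x ⊓ y = 0) : y ⊓ x ^ k = 0 :=
  funext fun i => min_pow_eq_zero_of_min_eq_zero hk (congr_fun h i)

end OrderedSemiring

lemma tApp_idT {m n : ℕ} (x : Fin n → ℝ) : tApp (idT m n) x = x ^ (m - 1) := by
  funext i
  rw [tApp, Finset.sum_eq_single (fun _ => i)]
  · simp [idT]
  · intro j _ hj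
    have : ¬ ∀ k, j k = i := fun h => hj (funext h)
    simp [idT, this]
  · simp

lemma tApp_zero {m n : ℕ} (hm : 2 ≤ m) (A : Tensor m n) : tApp A 0 = 0 := by
  funext i
  simp [tApp, zero_pow (show m - 1 ≠ 0 by omega)]

theorem r0Pair_of_r0Tensor_general (m n : ℕ) (hm : 2 ≤ m) (B : Tensor m n)
    (hB : R0Tensor B) : R0Pair (idT m n) B := by
  intro x y hxy h
  have hk : m - 1 ≠ 0 := by omega
  rw [sub_eq_zero, tApp_idT] at h
  obtain rfl : y = 0 := hB y (h ▸ Pi.inf_pow_eq_zero_of_inf_eq_zero hk hxy)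
  rw [tApp_zero hm] at h
  exact ⟨funext fun i => pow_eq_zero_iff hk |>.mp (congr_fun h i), rfl⟩

/-- if `B` is an R0 tensor then `{𝓘, B}` is an R0 tensor pair. -/
theorem r0Pair_of_r0Tensor (m n : ℕ) (hm : 2 ≤ m) (hn : 1 ≤ n) (B : Tensor m n)
    (hB : R0Tensor B) : R0Pair (idT m n) B :=
  r0Pair_of_r0Tensor_general m n hm B hB
end

section
/- Let m be even and let A and B be real tensors of order m and dimension n. Then {A,B} is a P tensor pair if and only if for all n×n diagonal matrices D1, D2 with nonnegative diagonal entries satisfying (D1)_{ii} + (D2)_{ii} > 0 for every i, the only x ∈ ℝ^n with A(D1 x)^{m-1} + B(D2 x)^{m-1} = 0 is x = 0. -/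
/-! Since `m - 1` is odd, `B (-y)^{m-1} = -B y^{m-1}`, so the P-pair condition concerns pairs
`(x, -y)` with `x * (-y) ≥ 0` componentwise. Such pairs are exactly the pairs `(D1 z, D2 z)`
with `z = x - y` and nonnegative diagonal weights satisfying `D1 + D2 > 0`, the weights being
`x_i / z_i` and `-y_i / z_i`; and `(D1 z, D2 z) = (0, 0)` forces `z = 0`. -/

open Finset

theorem Matrix.diagonal_mulVec_eq_mul {ι R : Type*} [Fintype ι] [DecidableEq ι]
    [NonUnitalNonAssocSemiring R] (d x : ι → R) : (Matrix.diagonal d).mulVec x = d * x :=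
  funext (Matrix.mulVec_diagonal d x)

theorem Matrix.IsDiag.mulVec_eq_diag_mul {ι R : Type*} [Fintype ι] [DecidableEq ι]
    [NonUnitalNonAssocSemiring R] {D : Matrix ι ι R} (hD : D.IsDiag) (x : ι → R) :
    D.mulVec x = D.diag * x := by
  rw [← hD.diagonal_diag, Matrix.diagonal_mulVec_eq_mul, Matrix.diag_diagonal]

theorem tApp_neg_of_odd {m n : ℕ} (hm : Odd (m - 1)) (A : Tensor m n) (x : Fin n → ℝ) :
    tApp A (-x) = -tApp A x := by
  funext i
  simp only [tApp, Pi.neg_apply, prod_neg, card_univ, Fintype.card_fin, hm.neg_one_pow,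
    neg_one_mul, mul_neg, sum_neg_distrib]

theorem exists_nonneg_weights_of_mul_nonpos {K : Type*} [Field K] [LinearOrder K]
    [IsStrictOrderedRing K] {a b : K} (hab : a * b ≤ 0) :
    ∃ s t : K, 0 ≤ s ∧ 0 ≤ t ∧ 0 < s + t ∧ s * (a - b) = a ∧ t * (a - b) = -b := by
  by_cases hz : a - b = 0
  · obtain rfl : a = b := sub_eq_zero.mp hz
    obtain rfl : a = 0 := mul_self_eq_zero.mp (le_antisymm hab (mul_self_nonneg a))
    exact ⟨1, 0, zero_le_one, le_rfl, by simp, by simp, by simp⟩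
  refine ⟨a / (a - b), -b / (a - b), ?_, ?_, ?_, div_mul_cancel₀ a hz, div_mul_cancel₀ (-b) hz⟩
  · rcases mul_nonpos_iff.mp hab with ⟨ha, hb⟩ | ⟨ha, hb⟩
    · exact div_nonneg ha (by linarith)
    · exact div_nonneg_of_nonpos ha (by linarith)
  · rcases mul_nonpos_iff.mp hab with ⟨ha, hb⟩ | ⟨ha, hb⟩
    · exact div_nonneg (by linarith) (by linarith)
    · exact div_nonneg_of_nonpos (by linarith) (by linarith)
  · rw [← add_div, ← sub_eq_add_neg, div_self hz]
    exact one_pos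

theorem pPair_iff_forall_nonneg_weights {m n : ℕ} (hm : Odd (m - 1)) (A B : Tensor m n) :
    PPair A B ↔ ∀ d e : Fin n → ℝ, 0 ≤ d → 0 ≤ e → (∀ i, 0 < d i + e i) →
      ∀ x, tApp A (d * x) + tApp B (e * x) = 0 → x = 0 := by
  constructor
  · intro hP d e hd he hde x hx
    have hprod : d * x * -(e * x) ≤ 0 := fun i => by
      have := mul_nonneg (mul_nonneg (hd i) (he i)) (mul_self_nonneg (x i))
      simp only [Pi.mul_apply, Pi.neg_apply, Pi.zero_apply]
      linarith
    obtain ⟨hdx, hex⟩ := hP _ _ hprod (by rwa [tApp_neg_of_odd hm, sub_neg_eq_add])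
    funext i
    have hsum : (d i + e i) * x i = 0 := by
      rw [add_mul]
      simp [← Pi.mul_apply, hdx, neg_eq_zero.mp hex]
    exact (mul_eq_zero.mp hsum).resolve_left (hde i).ne'
  · intro h x y hxy hxy'
    choose d e hd he hde hdx hey using fun i => exists_nonneg_weights_of_mul_nonpos (hxy i)
    have hx : d * (x - y) = x := funext hdx
    have hy : e * (x - y) = -y := funext hey
    have hz : x - y = 0 := h d e hd he hde _ <| by
      rwa [hx, hy, tApp_neg_of_odd hm, ← sub_eq_add_neg]
    constructor
    · rw [← hx, hz, mul_zero]
    · rw [← neg_eq_zero, ← hy, hz, mul_zero]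

theorem pPair_iff_diagonal_general (m n : ℕ) (hm : 2 ≤ m) (hme : Even m)
    (A B : Tensor m n) :
    PPair A B ↔
      ∀ D1 D2 : Matrix (Fin n) (Fin n) ℝ, D1.IsDiag → D2.IsDiag →
        (∀ i, 0 ≤ D1 i i) → (∀ i, 0 ≤ D2 i i) → (∀ i, 0 < D1 i i + D2 i i) →
        ∀ x : Fin n → ℝ, tApp A (D1.mulVec x) + tApp B (D2.mulVec x) = 0 → x = 0 := by
  rw [pPair_iff_forall_nonneg_weights (Nat.Even.sub_odd (by omega) hme odd_one)]
  constructor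
  · intro h D1 D2 hD1 hD2 h1 h2 h12 x hx
    rw [hD1.mulVec_eq_diag_mul, hD2.mulVec_eq_diag_mul] at hx
    exact h _ _ h1 h2 h12 x hx
  · intro h d e hd he hde x hx
    refine h (.diagonal d) (.diagonal e) (Matrix.isDiag_diagonal d) (Matrix.isDiag_diagonal e)
      (fun i => by simpa using hd i) (fun i => by simpa using he i) (by simpa using hde) x ?_
    rwa [Matrix.diagonal_mulVec_eq_mul, Matrix.diagonal_mulVec_eq_mul]

/-- for even `m`, `{A,B}` is a P tensor pair iff for all nonnegative
diagonal matrices `D1, D2` with `(D1)_{ii} + (D2)_{ii} > 0` for all `i`, the only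
solution of `A(D1 x)^{m-1} + B(D2 x)^{m-1} = 0` is `x = 0`. -/
theorem pPair_iff_diagonal (m n : ℕ) (hm : 2 ≤ m) (hn : 1 ≤ n) (hme : Even m)
    (A B : Tensor m n) :
    PPair A B ↔
      ∀ D1 D2 : Matrix (Fin n) (Fin n) ℝ, D1.IsDiag → D2.IsDiag →
        (∀ i, 0 ≤ D1 i i) → (∀ i, 0 ≤ D2 i i) → (∀ i, 0 < D1 i i + D2 i i) →
        ∀ x : Fin n → ℝ, tApp A (D1.mulVec x) + tApp B (D2.mulVec x) = 0 → x = 0 :=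
  pPair_iff_diagonal_general m n hm hme A B
end

section
/- Let A and B be the real tensors of order 3 and dimension 2 with entries a_{111} = a_{122} = 1, b_{111} = b_{122} = −1 and all other entries 0. Then {A,B} is a P tensor pair, and yet A x^{2} + B x^{2} = 0 for every x ∈ ℝ^2; in particular, taking D1 = D2 = I (the 2×2 identity matrix, so (D1)_{ii} + (D2)_{ii} > 0 for all i), the equation A(D1 x)^{2} + B(D2 x)^{2} = 0 has nonzero solutions, so the determinant characterization of P tensor pairs fails for odd order. -/
open Finset

/-- The order-3, dimension-2 tensor with `a₁₁₁ = a₁₂₂ = 1` and all other entries `0`. -/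
def exA : Tensor 3 2 :=
  fun i j => if i = 0 ∧ ((j 0 = 0 ∧ j 1 = 0) ∨ (j 0 = 1 ∧ j 1 = 1)) then 1 else 0

/-- The order-3, dimension-2 tensor with `b₁₁₁ = b₁₂₂ = -1` and all other entries `0`. -/
def exB : Tensor 3 2 :=
  fun i j => if i = 0 ∧ ((j 0 = 0 ∧ j 1 = 0) ∨ (j 0 = 1 ∧ j 1 = 1)) then -1 else 0

/-!
Since `exB = -exA`, the sum `A x² + B x²` vanishes identically. On the other hand the first
component of `A x² - B y² = A x² + A y²` is `|x|² + |y|²`, which vanishes only at `(0, 0)`.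
-/

theorem tApp_neg {m n : ℕ} (A : Tensor m n) (x : Fin n → ℝ) : tApp (-A) x = -tApp A x := by
  ext i
  simp [tApp, Finset.sum_neg_distrib]

theorem tApp_add_tApp_neg {m n : ℕ} (A : Tensor m n) (x : Fin n → ℝ) :
    tApp A x + tApp (-A) x = 0 := by
  rw [tApp_neg, add_neg_cancel]

theorem tApp_three_apply {n : ℕ} (A : Tensor 3 n) (x : Fin n → ℝ) (i : Fin n) :
    tApp A x i = ∑ j, ∑ k, A i ![j, k] * (x j * x k) := by
  rw [tApp, ← (finTwoArrowEquiv (Fin n)).symm.sum_comp, Fintype.sum_prod_type]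
  simp [Fin.prod_univ_two]

theorem exB_eq_neg_exA : exB = -exA := by
  ext i j
  simp only [exA, exB, Pi.neg_apply]
  split_ifs <;> norm_num

theorem tApp_exA_apply_zero (x : Fin 2 → ℝ) : tApp exA x 0 = x ⬝ᵥ x := by
  simp [tApp_three_apply, exA, dotProduct, Fin.sum_univ_two]

theorem pPair_neg_of_tApp_apply_eq_dotProduct_self {m n : ℕ} {A : Tensor m n} (i : Fin n)
    (hA : ∀ x, tApp A x i = x ⬝ᵥ x) : PPair A (-A) := by
  intro x y _ h
  have hsum : x ⬝ᵥ x + y ⬝ᵥ y = 0 := by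
    simpa [tApp_neg, hA] using congrFun h i
  have self_nonneg (v : Fin n → ℝ) : 0 ≤ v ⬝ᵥ v := Fintype.sum_nonneg fun j => mul_self_nonneg (v j)
  obtain ⟨hx, hy⟩ := (add_eq_zero_iff_of_nonneg (self_nonneg x) (self_nonneg y)).mp hsum
  exact ⟨dotProduct_self_eq_zero.mp hx, dotProduct_self_eq_zero.mp hy⟩

/-- `{exA, exB}` is a P tensor pair of odd order, yet
`A x² + B x² = 0` for all `x`; taking `D1 = D2 = I`, the equation
`A(D1 x)² + B(D2 x)² = 0` has nonzero solutions, so the determinant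
characterization of P tensor pairs fails for odd order. -/
theorem odd_order_counterexample :
    PPair exA exB ∧ (∀ x : Fin 2 → ℝ, tApp exA x + tApp exB x = 0) ∧
      ∃ x : Fin 2 → ℝ, x ≠ 0 ∧
        tApp exA ((1 : Matrix (Fin 2) (Fin 2) ℝ).mulVec x) +
          tApp exB ((1 : Matrix (Fin 2) (Fin 2) ℝ).mulVec x) = 0 := by
  rw [exB_eq_neg_exA]
  refine ⟨pPair_neg_of_tApp_apply_eq_dotProduct_self 0 tApp_exA_apply_zero,
    tApp_add_tApp_neg exA, 1, one_ne_zero, ?_⟩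
  rw [Matrix.one_mulVec]
  exact tApp_add_tApp_neg exA 1
end
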